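/- For matrices A ∈ ℝ^{J×R} and B ∈ ℝ^{I×R}, the k-rank of the Khatri-Rao product satisfies k_{A⊙B} ≥ min{k_A + k_B − 1, R}, provided k_A, k_B ≥ 1. -/

import Mathlib

open scoped BigOperators

/-- The k-rank (Kruskal rank) of a matrix: the largest `k ≤ R` such that every
set of `k` columns is linearly independent. -/
noncomputable def kRank {m : Type*} [Fintype m] {R : ℕ} (A : Matrix m (Fin R) ℝ) : ℕ :=
  sSup {k | k ≤ R ∧ ∀ s : Finset (Fin R), s.card = k →
    LinearIndependent ℝ (fun r : s => A.transpose r.val)}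

/-- The Khatri-Rao (column-wise Kronecker) product. -/
def khatriRao {J I R : ℕ} (A : Matrix (Fin J) (Fin R) ℝ)
    (B : Matrix (Fin I) (Fin R) ℝ) : Matrix (Fin J × Fin I) (Fin R) ℝ :=
  fun p r => A p.1 r * B p.2 r

/-!
Let `∑ r ∈ s, d r • (a r ⊗ b r) = 0` with `d r₀ ≠ 0` and `#s ≤ k_A + k_B - 1`. Choose `Q ⊆ s`
containing `r₀` with `#Q = min #s k_B`; its `b`-columns are independent, so some functional `f`
kills `b r` for `r ∈ Q \ {r₀}` but not `b r₀`. Contracting the relation with `f` gives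
`∑ r ∈ s, (d r * f (b r)) • a r = 0`, a relation supported on `(s \ Q) ∪ {r₀}`, which has at most
`k_A` elements. Hence its coefficient `d r₀ * f (b r₀)` at `r₀` vanishes, a contradiction.
-/

theorem LinearIndepOn.exists_linearMap_apply_ne_zero {K V ι : Type*} [Field K] [AddCommGroup V]
    [Module K V] {b : ι → V} {s : Set ι} (hb : LinearIndepOn K b s) {i : ι} (hi : i ∈ s) :
    ∃ f : V →ₗ[K] K, f (b i) ≠ 0 ∧ ∀ j ∈ s, j ≠ i → f (b j) = 0 := by
  obtain ⟨f, hfi, hker⟩ :=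
    Submodule.exists_le_ker_of_notMem (linearIndepOn_iff_notMem_span.mp hb i hi)
  exact ⟨f, hfi, fun j hj hji => hker (Submodule.subset_span ⟨j, ⟨hj, hji⟩, rfl⟩)⟩

theorem sum_smul_kronecker_contract {K ι m n : Type*} [CommRing K] {s : Finset ι} {d : ι → K}
    {a : ι → m → K} {b : ι → n → K}
    (h : ∑ r ∈ s, d r • (fun p : m × n => a r p.1 * b r p.2) = 0) (f : (n → K) →ₗ[K] K) :
    ∑ r ∈ s, (d r * f (b r)) • a r = 0 := by
  funext j
  have hrow : ∑ r ∈ s, (d r * a r j) • b r = 0 := by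
    funext i
    simpa [Finset.sum_apply, mul_assoc] using congrFun h (j, i)
  have hf := congrArg f hrow
  simp only [map_sum, map_smul, smul_eq_mul, map_zero] at hf
  simpa [Finset.sum_apply, mul_right_comm] using hf

theorem linearIndepOn_kronecker_of_card_le {K ι m n : Type*} [Field K]
    {a : ι → m → K} {b : ι → n → K} {kA kB : ℕ} {s : Finset ι} (hkA : 1 ≤ kA) (hkB : 1 ≤ kB)
    (ha : ∀ t ⊆ s, t.card ≤ kA → LinearIndepOn K a t)
    (hb : ∀ t ⊆ s, t.card ≤ kB → LinearIndepOn K b t) (hs : s.card + 1 ≤ kA + kB) :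
    LinearIndepOn K (fun r (p : m × n) => a r p.1 * b r p.2) s := by
  classical
  rw [linearIndepOn_finset_iff]
  intro d hd r₀ hr₀
  by_contra hd₀
  obtain ⟨Q, hr₀Q, hQs, hQcard⟩ := Finset.exists_subsuperset_card_eq
    (Finset.singleton_subset_iff.mpr hr₀) (n := min s.card kB)
    (by simpa using ⟨⟨r₀, hr₀⟩, hkB⟩) (min_le_left _ _)
  obtain ⟨f, hf₀, hfQ⟩ := (hb Q hQs (by omega)).exists_linearMap_apply_ne_zero
    (Finset.singleton_subset_iff.mp hr₀Q)
  set P := insert r₀ (s \ Q)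
  have hPs : P ⊆ s := Finset.insert_subset hr₀ Finset.sdiff_subset
  have hPcard : P.card ≤ kA := by
    have : P.card ≤ (s \ Q).card + 1 := Finset.card_insert_le r₀ (s \ Q)
    rw [Finset.card_sdiff_of_subset hQs] at this
    omega
  have hrel : ∑ r ∈ P, (d r * f (b r)) • a r = 0 := by
    rw [← sum_smul_kronecker_contract hd f]
    refine Finset.sum_subset hPs fun r hrs hrP => ?_
    have hrQ : r ∈ Q := by_contra fun h => hrP (Finset.mem_insert_of_mem (by simp [hrs, h]))
    have hr : r ≠ r₀ := fun h => hrP (h ▸ Finset.mem_insert_self _ _)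
    simp [hfQ r hrQ hr]
  exact mul_ne_zero hd₀ hf₀ <|
    linearIndepOn_finset_iff.mp (ha P hPs hPcard) _ hrel r₀ (Finset.mem_insert_self _ _)

section KRank

variable {m : Type*} [Fintype m] {R : ℕ}

theorem linearIndepOn_of_card_le_kRank (A : Matrix m (Fin R) ℝ) {s : Finset (Fin R)}
    (hs : s.card ≤ kRank A) : LinearIndepOn ℝ A.transpose s := by
  have hmem : kRank A ∈ {k | k ≤ R ∧ ∀ s : Finset (Fin R), s.card = k →
      LinearIndependent ℝ (fun r : s => A.transpose r.val)} := by
    refine Nat.sSup_mem ⟨0, Nat.zero_le _, fun s hs => ?_⟩ ⟨R, fun _ hk => hk.1⟩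
    rw [Finset.card_eq_zero.mp hs]
    exact linearIndependent_empty_type
  obtain ⟨t, hst, htcard⟩ := Finset.exists_superset_card_eq hs (by simpa using hmem.1)
  exact LinearIndepOn.mono (hmem.2 t htcard) (Finset.coe_subset.mpr hst)

theorem le_kRank (A : Matrix m (Fin R) ℝ) {k : ℕ} (hkR : k ≤ R)
    (h : ∀ s : Finset (Fin R), s.card = k → LinearIndepOn ℝ A.transpose s) : k ≤ kRank A :=
  le_csSup ⟨R, fun _ hk => hk.1⟩ ⟨hkR, h⟩

end KRank

/-- `k_{A⊙B} ≥ min{k_A + k_B − 1, R}` provided `k_A, k_B ≥ 1`. -/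
theorem khatriRao_kRank {J I R : ℕ}
    (A : Matrix (Fin J) (Fin R) ℝ) (B : Matrix (Fin I) (Fin R) ℝ)
    (hA : 1 ≤ kRank A) (hB : 1 ≤ kRank B) :
    min (kRank A + kRank B - 1) R ≤ kRank (khatriRao A B) := by
  refine le_kRank _ (min_le_right _ _) fun s hs => ?_
  have hcard : s.card + 1 ≤ kRank A + kRank B := by omega
  exact linearIndepOn_kronecker_of_card_le (a := A.transpose) (b := B.transpose) hA hB
    (fun _ _ ht => linearIndepOn_of_card_le_kRank A ht)
    (fun _ _ ht => linearIndepOn_of_card_le_kRank B ht) hcard
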